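/- Let $V$ be a finite-dimensional real inner product space, $v \in V$, and equip each exterior power $\Lambda^k V^*$ with the $v$-induced inner product $\langle \omega, \eta\rangle_v = \langle T_v \omega, \eta\rangle$, where $T_v = \mathrm{id} + v^\flat \wedge \iota_v$ and $\langle\cdot,\cdot\rangle$ is the determinant inner product. Let $\xi \in V^*$ with $\xi \neq 0$, let $A : \Lambda^{k} V^* \to \Lambda^{k+1} V^*$ be wedge multiplication by $\xi$ (on each degree), and let $A^* $ be its adjoint with respect to the inner products $\langle\cdot,\cdot\rangle_v$. Then the operator $A A^* + A^* A : \Lambda^k V^* \to \Lambda^k V^*$ is injective, hence a linear isomorphism. -/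

import Mathlib

open scoped RealInnerProductSpace TensorProduct

noncomputable section

namespace VF

/-- The space of alternating `k`-forms on `V` (i.e. `Λ^k V^*`). -/
abbrev Form (V : Type*) [AddCommMonoid V] [Module ℝ V] (k : ℕ) :=
  AlternatingMap ℝ V ℝ (Fin k)

variable {V : Type*} [NormedAddCommGroup V] [InnerProductSpace ℝ V]

/-- `v^♭ = ⟪v, ·⟫`. -/
def flat (v : V) : V →ₗ[ℝ] ℝ where
  toFun w := ⟪v, w⟫
  map_add' x y := inner_add_right v x y
  map_smul' c x := by simp [inner_smul_right]

section VS
variable {W : Type*} [AddCommGroup W] [Module ℝ W]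

/-- A linear functional regarded as an alternating `1`-form. -/
def oneForm (ξ : W →ₗ[ℝ] ℝ) : Form W 1 :=
  AlternatingMap.ofSubsingleton ℝ W ℝ 0 ξ

/-- Reindexing a `p`-form as a `q`-form along a proof that `p = q`. -/
def castForm {p q : ℕ} (h : p = q) (ω : Form W p) : Form W q :=
  ω.domDomCongr (finCongr h)

/-- Wedge product of alternating forms (shuffle/determinant convention). -/
def wedge {p q : ℕ} (ω : Form W p) (η : Form W q) : Form W (p + q) :=
  ((TensorProduct.lid ℝ ℝ).toLinearMap.compAlternatingMap
    (ω.domCoprod η)).domDomCongr finSumFinEquiv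

/-- Wedge product of a `1`-form (given as a linear functional) with a `k`-form. -/
def wedge1 (ξ : W →ₗ[ℝ] ℝ) {k : ℕ} (ζ : Form W k) : Form W (k + 1) :=
  castForm (Nat.add_comm 1 k) (wedge (oneForm ξ) ζ)

/-- The interior product `ι_v` on `(k+1)`-forms: insertion of `v` into the first slot. -/
def interior (v : W) {k : ℕ} (η : Form W (k + 1)) : Form W k :=
  η.curryLeft v

/-- The interior product `ι_v : Λ^k → Λ^{k-1}`, defined to be `0` on `0`-forms. -/
def interiorz (v : W) : ∀ {k : ℕ}, Form W k → Form W (k - 1)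
  | 0, _ => 0
  | _ + 1, η => interior v η

end VS

/-- The form `v^♭ ∧ ι_v ω` (of the same degree as `ω`); it is `0` on `0`-forms since
`ι_v = 0` there. -/
def vwi (v : V) : ∀ {k : ℕ}, Form V k → Form V k
  | 0, _ => 0
  | _ + 1, ω => wedge1 (flat v) (interior v ω)

/-- The operator `T_v = id + v^♭ ∧ ι_v` on `k`-forms. -/
def Tv (v : V) {k : ℕ} (ω : Form V k) : Form V k :=
  ω + vwi v ω

variable [FiniteDimensional ℝ V]

/-- The decomposable form `ω₁ ∧ ⋯ ∧ ω_k`, i.e. `x ↦ det (ωᵢ (x j))`. -/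
def decomp {k : ℕ} (ω : Fin k → V →ₗ[ℝ] ℝ) : Form V k :=
  Matrix.detRowAlternating.compLinearMap (LinearMap.pi ω)

/-- The inner product on `V^*` induced by the inner product on `V`. -/
def dualInner (ξ ψ : V →ₗ[ℝ] ℝ) : ℝ :=
  ⟪(InnerProductSpace.toDual ℝ V).symm (LinearMap.toContinuousLinearMap ξ),
   (InnerProductSpace.toDual ℝ V).symm (LinearMap.toContinuousLinearMap ψ)⟫

/-- The property of being (the family of) determinant inner products on the exterior powers
`Λ^k V^*`: a bilinear form on each `Λ^k V^*` whose value on decomposables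
`⟨ω₁ ∧ ⋯ ∧ ω_k, η₁ ∧ ⋯ ∧ η_k⟩` is `det (⟨ωᵢ, η_j⟩)`. Together with bilinearity this
determines the inner product uniquely. -/
def IsDetInner (inn : ∀ k, Form V k →ₗ[ℝ] Form V k →ₗ[ℝ] ℝ) : Prop :=
  ∀ (k : ℕ) (ω η : Fin k → V →ₗ[ℝ] ℝ),
    inn k (decomp ω) (decomp η) = Matrix.det (Matrix.of fun i j => dualInner (ω i) (η j))


/-- The operator `A A^* + A^* A` on `Λ^k V^*`, where `A` is wedge multiplication by `ξ`
(raising the degree by one) and `B m` plays the role of its degree-lowering adjoint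
`A^* : Λ^{m+1} V^* → Λ^m V^*` (on `Λ^0` the term `A A^*` is absent since `A^* = 0` there). -/
def symbLap {V : Type*} [NormedAddCommGroup V] [InnerProductSpace ℝ V]
    (ξ : V →ₗ[ℝ] ℝ) (B : ∀ m, Form V (m + 1) →ₗ[ℝ] Form V m) :
    ∀ {k : ℕ}, Form V k → Form V k
  | 0, ω => B 0 (wedge1 ξ ω)
  | _ + 1, ω => wedge1 ξ (B _ ω) + B _ (wedge1 ξ ω)

/-!
The determinant inner product on `Λ^k V^*` is the Gram inner product of `⋀^k V` transported
along `y ↦ (x ↦ ⟪y, x₁ ∧ ⋯ ∧ x_k⟫)`, hence symmetric and positive definite. On decomposables,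
Laplace expansion along the first row shows that `u^♭ ∧ ·` and `ι_u` are adjoint, so
`⟨ω, η⟩_v = ⟨ω, η⟩ + ⟨ι_v ω, ι_v η⟩` is again an inner product.

For `L = A A^* + A^* A` one has `⟨L ω, ω⟩_v = |A^* ω|_v² + |A ω|_v²`, so `L ω = 0` forces
`ξ ∧ ω = 0` and `A^* ω = 0`. Choosing `u` with `ξ u ≠ 0`, the identity
`ι_u (ξ ∧ ω) = ξ(u) ω - ξ ∧ ι_u ω` shows that then `ω = ξ ∧ τ`, whence
`|ω|_v² = ⟨τ, A^* ω⟩_v = 0`.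
-/

section Shuffles

open Equiv

/-- The reindexing `Fin 1 ⊕ Fin k ≃ Fin (k + 1)` built into `wedge1`. -/
def finOneSumEquiv (k : ℕ) : Fin 1 ⊕ Fin k ≃ Fin (k + 1) :=
  finSumFinEquiv.trans (finCongr (Nat.add_comm 1 k))

@[simp]
lemma finOneSumEquiv_inl (k : ℕ) (i : Fin 1) : finOneSumEquiv k (.inl i) = 0 := by
  ext; simp [finOneSumEquiv]

@[simp]
lemma finOneSumEquiv_inr (k : ℕ) (j : Fin k) : finOneSumEquiv k (.inr j) = j.succ := by
  ext; simp [finOneSumEquiv]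

lemma modSumCongr_mk_eq_mk_iff {β : Type*} [Finite β] (σ τ : Perm (Fin 1 ⊕ β)) :
    (Quotient.mk'' σ : Perm.ModSumCongr (Fin 1) β) = Quotient.mk'' τ ↔
      σ (.inl 0) = τ (.inl 0) := by
  rw [Quotient.eq'', QuotientGroup.leftRel_apply]
  constructor
  · rintro ⟨⟨σl, σr⟩, h⟩
    have := congr($h (.inl 0))
    simp only [Perm.sumCongrHom_apply, sumCongr_apply, Sum.map_inl, Perm.mul_apply,
      Perm.inv_def, Subsingleton.elim (σl 0) 0] at this
    exact ((symm_apply_eq σ).mp this.symm).symm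
  · intro h
    refine Perm.mem_sumCongrHom_range_of_perm_mapsTo_inl ?_
    rintro _ ⟨i, rfl⟩
    refine ⟨0, ?_⟩
    rw [Subsingleton.elim i 0, Perm.mul_apply, ← h, Perm.inv_def, symm_apply_apply]

/-- The shuffle moving the single slot of a `1`-form to position `t`; its coset is the
summand of the wedge product in which `ξ` is evaluated at `x t`. -/
def shuffleAt {k : ℕ} (t : Fin (k + 1)) : Perm (Fin 1 ⊕ Fin k) :=
  (finOneSumEquiv k).symm.permCongr (Fin.cycleRange t).symm

lemma finOneSumEquiv_shuffleAt_inl {k : ℕ} (t : Fin (k + 1)) (i : Fin 1) :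
    finOneSumEquiv k (shuffleAt t (.inl i)) = t := by
  simp [shuffleAt, permCongr_apply]

lemma finOneSumEquiv_shuffleAt_inr {k : ℕ} (t : Fin (k + 1)) (j : Fin k) :
    finOneSumEquiv k (shuffleAt t (.inr j)) = t.succAbove j := by
  simp [shuffleAt, permCongr_apply]

lemma sign_shuffleAt {k : ℕ} (t : Fin (k + 1)) : Perm.sign (shuffleAt t) = (-1) ^ (t : ℕ) := by
  rw [shuffleAt, Perm.sign_permCongr, Perm.sign_symm, Fin.sign_cycleRange]

lemma bijective_mk_shuffleAt (k : ℕ) :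
    Function.Bijective fun t : Fin (k + 1) =>
      (Quotient.mk'' (shuffleAt t) : Perm.ModSumCongr (Fin 1) (Fin k)) := by
  refine ⟨fun s t hst => ?_, fun q => ?_⟩
  · have := congrArg (finOneSumEquiv k) ((modSumCongr_mk_eq_mk_iff _ _).mp hst)
    rwa [finOneSumEquiv_shuffleAt_inl, finOneSumEquiv_shuffleAt_inl] at this
  · induction q using Quotient.inductionOn' with | h σ => ?_
    refine ⟨finOneSumEquiv k (σ (.inl 0)), (modSumCongr_mk_eq_mk_iff _ _).mpr ?_⟩
    exact (finOneSumEquiv k).injective (finOneSumEquiv_shuffleAt_inl _ _)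

end Shuffles

instance {R M N ι : Type*} [Semiring R] [AddCommMonoid M] [Module R M] [AddCommMonoid N]
    [Module R N] : IsZeroApply (M [⋀^ι]→ₗ[R] N) (ι → M) N :=
  ⟨AlternatingMap.zero_apply⟩

instance {R M N ι : Type*} [Semiring R] [AddCommMonoid M] [Module R M] [AddCommMonoid N]
    [Module R N] : IsAddApply (M [⋀^ι]→ₗ[R] N) (ι → M) N :=
  ⟨AlternatingMap.add_apply⟩

section Wedge
variable {W : Type*} [AddCommGroup W] [Module ℝ W]

lemma wedge1_apply (ξ : W →ₗ[ℝ] ℝ) {k : ℕ} (ζ : Form W k) (x : Fin (k + 1) → W) :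
    wedge1 ξ ζ x = ∑ t : Fin (k + 1), (-1) ^ (t : ℕ) * (ξ (x t) * ζ (t.removeNth x)) := by
  change (TensorProduct.lid ℝ ℝ).toLinearMap ((oneForm ξ).domCoprod ζ (x ∘ finOneSumEquiv k)) = _
  rw [AlternatingMap.domCoprod_apply, sum_apply, map_sum]
  refine (Fintype.sum_bijective _ (bijective_mk_shuffleAt k) _ _ fun t => ?_).symm
  rw [AlternatingMap.domCoprod.summand_mk'', smul_apply,
    MultilinearMap.domDomCongr_apply, MultilinearMap.domCoprod_apply, sign_shuffleAt,
    Units.smul_def, map_zsmul]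
  simp only [LinearEquiv.coe_coe, TensorProduct.lid_tmul, oneForm,
    AlternatingMap.coe_multilinearMap, AlternatingMap.ofSubsingleton_apply_apply, Function.comp,
    finOneSumEquiv_shuffleAt_inl, finOneSumEquiv_shuffleAt_inr, smul_eq_mul, zsmul_eq_mul]
  push_cast
  rfl

lemma interior_apply (u : W) {k : ℕ} (η : Form W (k + 1)) (x : Fin k → W) :
    interior u η x = η (Fin.cons u x) := rfl

def wedge1ₗ (ξ : W →ₗ[ℝ] ℝ) (k : ℕ) : Form W k →ₗ[ℝ] Form W (k + 1) where
  toFun := wedge1 ξ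
  map_add' ζ₁ ζ₂ := by ext x; simp [wedge1_apply, Finset.sum_add_distrib, mul_add]
  map_smul' c ζ := by ext x; simp [wedge1_apply, Finset.mul_sum, mul_left_comm]

@[simp]
lemma wedge1ₗ_apply (ξ : W →ₗ[ℝ] ℝ) {k : ℕ} (ζ : Form W k) : wedge1ₗ ξ k ζ = wedge1 ξ ζ := rfl

def interiorₗ (u : W) (k : ℕ) : Form W (k + 1) →ₗ[ℝ] Form W k :=
  AlternatingMap.curryLeftLinearMap.flip u

@[simp]
lemma interiorₗ_apply (u : W) {k : ℕ} (η : Form W (k + 1)) : interiorₗ u k η = interior u η := rfl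

lemma interior_wedge1 (ξ : W →ₗ[ℝ] ℝ) (u : W) {k : ℕ} (ω : Form W (k + 1)) :
    interior u (wedge1 ξ ω) = ξ u • ω - wedge1 ξ (interior u ω) := by
  ext x
  have hcons (j : Fin (k + 1)) : j.succ.removeNth (Fin.cons u x : Fin (k + 2) → W) =
      (Fin.cons u (j.removeNth x) : Fin (k + 1) → W) := by
    ext r
    cases r using Fin.cases <;> simp [Fin.removeNth_apply, Fin.succ_succAbove_succ]
  rw [AlternatingMap.sub_apply, AlternatingMap.smul_apply, interior_apply, wedge1_apply,
    wedge1_apply, Fin.sum_univ_succ]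
  simp only [Fin.cons_zero, Fin.removeNth_zero, Fin.tail_cons, Fin.cons_succ, hcons,
    interior_apply, Fin.val_zero, Fin.val_succ, pow_zero, pow_succ, one_mul, smul_eq_mul,
    sub_eq_add_neg, ← Finset.sum_neg_distrib]
  congr 1
  refine Finset.sum_congr rfl fun j _ => by ring

lemma interior_wedge1_of_degree_zero (ξ : W →ₗ[ℝ] ℝ) (u : W) (ω : Form W 0) :
    interior u (wedge1 ξ ω) = ξ u • ω := by
  ext x
  simp [interior_apply, wedge1_apply]

lemma eq_zero_of_wedge1_eq_zero {ξ : W →ₗ[ℝ] ℝ} (hξ : ξ ≠ 0) {ω : Form W 0}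
    (h : wedge1 ξ ω = 0) : ω = 0 := by
  obtain ⟨u, hu⟩ := DFunLike.ne_iff.mp hξ
  have := interior_wedge1_of_degree_zero ξ u ω
  rw [h, ← interiorₗ_apply, map_zero] at this
  exact (smul_eq_zero.mp this.symm).resolve_left hu

lemma exists_eq_wedge1_of_wedge1_eq_zero {ξ : W →ₗ[ℝ] ℝ} (hξ : ξ ≠ 0) {k : ℕ}
    {ω : Form W (k + 1)} (h : wedge1 ξ ω = 0) : ∃ τ : Form W k, ω = wedge1 ξ τ := by
  obtain ⟨u, hu⟩ := DFunLike.ne_iff.mp hξ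
  have := interior_wedge1 ξ u ω
  rw [h, ← interiorₗ_apply, map_zero, eq_comm, sub_eq_zero] at this
  refine ⟨(ξ u)⁻¹ • interior u ω, ?_⟩
  rw [← wedge1ₗ_apply, map_smul, wedge1ₗ_apply, ← this, inv_smul_smul₀ hu]

end Wedge

section Decomposable

omit [FiniteDimensional ℝ V]

lemma decomp_apply {k : ℕ} (φ : Fin k → V →ₗ[ℝ] ℝ) (x : Fin k → V) :
    decomp φ x = Matrix.det (Matrix.of fun i j => φ j (x i)) := rfl

lemma wedge1_decomp (ξ : V →ₗ[ℝ] ℝ) {k : ℕ} (φ : Fin k → V →ₗ[ℝ] ℝ) :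
    wedge1 ξ (decomp φ) = decomp (Fin.cons ξ φ) := by
  ext x
  rw [wedge1_apply, decomp_apply, Matrix.det_succ_column_zero]
  refine Finset.sum_congr rfl fun i _ => ?_
  rw [decomp_apply, mul_assoc]
  simp [Matrix.submatrix, Fin.removeNth_apply]

lemma interior_decomp (u : V) {k : ℕ} (φ : Fin (k + 1) → V →ₗ[ℝ] ℝ) :
    interior u (decomp φ) =
      ∑ j : Fin (k + 1), ((-1) ^ (j : ℕ) * φ j u) • decomp (j.removeNth φ) := by
  ext x
  rw [interior_apply, decomp_apply, Matrix.det_succ_row_zero, sum_apply]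
  refine Finset.sum_congr rfl fun j _ => ?_
  rw [AlternatingMap.smul_apply, smul_eq_mul, decomp_apply]
  simp [Matrix.submatrix, Fin.removeNth_apply, mul_assoc]

end Decomposable

section DetInner

open exteriorPower

/-- The isomorphism `⋀^k V ≃ Λ^k V^*` given by `y ↦ (x ↦ ⟪y, x₁ ∧ ⋯ ∧ x_k⟫)`. -/
def formEquivExteriorPower (k : ℕ) : ⋀[ℝ]^k V ≃ₗ[ℝ] Form V k :=
  (InnerProductSpace.toDual ℝ (⋀[ℝ]^k V)).toLinearEquiv ≪≫ₗ
    LinearMap.toContinuousLinearMap.symm ≪≫ₗ alternatingMapLinearEquiv.symm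

lemma formEquivExteriorPower_apply {k : ℕ} (y : ⋀[ℝ]^k V) (x : Fin k → V) :
    formEquivExteriorPower k y x = ⟪y, ιMulti ℝ k x⟫ := by
  simp [formEquivExteriorPower]

lemma formEquivExteriorPower_ιMulti {k : ℕ} (u : Fin k → V) :
    formEquivExteriorPower k (ιMulti ℝ k u) = decomp fun i => flat (u i) := by
  ext x
  rw [formEquivExteriorPower_apply, inner_ιMulti_ιMulti]
  rfl

lemma dualInner_flat_left (u : V) (ψ : V →ₗ[ℝ] ℝ) : dualInner (flat u) ψ = ψ u := by
  have : (InnerProductSpace.toDual ℝ V).symm (LinearMap.toContinuousLinearMap (flat u)) = u :=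
    (InnerProductSpace.toDual ℝ V).symm_apply_eq.mpr rfl
  rw [dualInner, this, real_inner_comm, ← InnerProductSpace.toDual_apply_apply,
    LinearIsometryEquiv.apply_symm_apply]
  rfl

variable {inn : ∀ k, Form V k →ₗ[ℝ] Form V k →ₗ[ℝ] ℝ}

lemma IsDetInner.apply_formEquivExteriorPower (hinn : IsDetInner inn) {k : ℕ}
    (y y' : ⋀[ℝ]^k V) :
    inn k (formEquivExteriorPower k y) (formEquivExteriorPower k y') = ⟪y, y'⟫ := by
  suffices (inn k).compl₁₂ (formEquivExteriorPower k).toLinearMap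
      (formEquivExteriorPower k).toLinearMap = innerₗ _ from congr($this y y')
  ext a b
  simp only [LinearMap.compAlternatingMap_apply, LinearMap.compl₁₂_apply, LinearEquiv.coe_coe,
    formEquivExteriorPower_ιMulti, innerₗ_apply_apply, inner_ιMulti_ιMulti]
  rw [hinn, ← Matrix.det_transpose]
  congr 1
  ext i j
  simp only [dualInner_flat_left, Matrix.transpose_apply, Matrix.of_apply]
  exact real_inner_comm _ _

lemma IsDetInner.comm (hinn : IsDetInner inn) {k : ℕ} (ω η : Form V k) :
    inn k ω η = inn k η ω := by
  obtain ⟨y, rfl⟩ := (formEquivExteriorPower k).surjective ω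
  obtain ⟨y', rfl⟩ := (formEquivExteriorPower k).surjective η
  rw [hinn.apply_formEquivExteriorPower, hinn.apply_formEquivExteriorPower, real_inner_comm]

lemma IsDetInner.self_nonneg (hinn : IsDetInner inn) {k : ℕ} (ω : Form V k) :
    0 ≤ inn k ω ω := by
  obtain ⟨y, rfl⟩ := (formEquivExteriorPower k).surjective ω
  rw [hinn.apply_formEquivExteriorPower]
  exact real_inner_self_nonneg

lemma IsDetInner.self_eq_zero (hinn : IsDetInner inn) {k : ℕ} {ω : Form V k} :
    inn k ω ω = 0 ↔ ω = 0 := by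
  obtain ⟨y, rfl⟩ := (formEquivExteriorPower k).surjective ω
  rw [hinn.apply_formEquivExteriorPower, inner_self_eq_zero, LinearEquiv.map_eq_zero_iff]

lemma IsDetInner.inner_wedge1_flat_decomp (hinn : IsDetInner inn) (u : V) {k : ℕ}
    (φ : Fin k → V →ₗ[ℝ] ℝ) (ψ : Fin (k + 1) → V →ₗ[ℝ] ℝ) :
    inn (k + 1) (wedge1 (flat u) (decomp φ)) (decomp ψ) =
      inn k (decomp φ) (interior u (decomp ψ)) := by
  rw [wedge1_decomp, hinn, interior_decomp, map_sum, Matrix.det_succ_row_zero]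
  refine Finset.sum_congr rfl fun j _ => ?_
  rw [map_smul, smul_eq_mul, hinn]
  simp [Matrix.submatrix, Fin.removeNth_apply, dualInner_flat_left, mul_assoc]

lemma IsDetInner.inner_wedge1_flat (hinn : IsDetInner inn) (u : V) {k : ℕ} (α : Form V k)
    (β : Form V (k + 1)) : inn (k + 1) (wedge1 (flat u) α) β = inn k α (interior u β) := by
  obtain ⟨a, rfl⟩ := (formEquivExteriorPower k).surjective α
  obtain ⟨b, rfl⟩ := (formEquivExteriorPower (k + 1)).surjective β
  suffices (inn (k + 1)).compl₁₂ (wedge1ₗ (flat u) k ∘ₗ (formEquivExteriorPower k).toLinearMap)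
      (formEquivExteriorPower (k + 1)).toLinearMap =
      (inn k).compl₁₂ (formEquivExteriorPower k).toLinearMap
        (interiorₗ u k ∘ₗ (formEquivExteriorPower (k + 1)).toLinearMap) from congr($this a b)
  ext a b
  simpa [formEquivExteriorPower_ιMulti] using hinn.inner_wedge1_flat_decomp u _ _

instance (k : ℕ) : FiniteDimensional ℝ (Form V k) :=
  (formEquivExteriorPower k).finiteDimensional

lemma IsDetInner.inner_Tv (hinn : IsDetInner inn) (v : V) {k : ℕ} (ω η : Form V k) :
    inn k (Tv v ω) η = inn k ω η + inn (k - 1) (interiorz v ω) (interiorz v η) := by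
  cases k with
  | zero => simp [Tv, vwi, interiorz]
  | succ m =>
    change inn (m + 1) (ω + wedge1 (flat v) (interior v ω)) η = _
    rw [map_add, LinearMap.add_apply, hinn.inner_wedge1_flat]
    rfl

lemma IsDetInner.inner_Tv_comm (hinn : IsDetInner inn) (v : V) {k : ℕ} (ω η : Form V k) :
    inn k (Tv v ω) η = inn k (Tv v η) ω := by
  rw [hinn.inner_Tv, hinn.inner_Tv, hinn.comm ω, hinn.comm (interiorz v ω)]

lemma IsDetInner.inner_Tv_self_nonneg (hinn : IsDetInner inn) (v : V) {k : ℕ} (ω : Form V k) :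
    0 ≤ inn k (Tv v ω) ω := by
  rw [hinn.inner_Tv]
  exact add_nonneg (hinn.self_nonneg ω) (hinn.self_nonneg _)

lemma IsDetInner.inner_Tv_self_eq_zero (hinn : IsDetInner inn) (v : V) {k : ℕ}
    {ω : Form V k} : inn k (Tv v ω) ω = 0 ↔ ω = 0 := by
  refine ⟨fun h => ?_, fun h => by rw [h, map_zero]⟩
  rw [hinn.inner_Tv, add_eq_zero_iff_of_nonneg (hinn.self_nonneg _) (hinn.self_nonneg _)] at h
  exact hinn.self_eq_zero.mp h.1

end DetInner

section SymbolLaplacian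

def symbLapₗ (ξ : V →ₗ[ℝ] ℝ) (B : ∀ m, Form V (m + 1) →ₗ[ℝ] Form V m) :
    ∀ k, Form V k →ₗ[ℝ] Form V k
  | 0 => B 0 ∘ₗ wedge1ₗ ξ 0
  | m + 1 => wedge1ₗ ξ m ∘ₗ B m + B (m + 1) ∘ₗ wedge1ₗ ξ (m + 1)

omit [FiniteDimensional ℝ V] in
lemma coe_symbLapₗ (ξ : V →ₗ[ℝ] ℝ) (B : ∀ m, Form V (m + 1) →ₗ[ℝ] Form V m) (k : ℕ) :
    ⇑(symbLapₗ ξ B k) = symbLap ξ B := by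
  cases k <;> rfl

variable {v : V} {inn : ∀ k, Form V k →ₗ[ℝ] Form V k →ₗ[ℝ] ℝ} {ξ : V →ₗ[ℝ] ℝ}
  {B : ∀ m, Form V (m + 1) →ₗ[ℝ] Form V m}

lemma IsDetInner.inner_Tv_symbLap (hinn : IsDetInner inn)
    (hB : ∀ (m : ℕ) (α : Form V m) (β : Form V (m + 1)),
      inn (m + 1) (Tv v (wedge1 ξ α)) β = inn m (Tv v α) (B m β))
    {m : ℕ} (ω : Form V (m + 1)) :
    inn (m + 1) (Tv v ω) (symbLap ξ B ω) =
      inn m (Tv v (B m ω)) (B m ω) + inn (m + 2) (Tv v (wedge1 ξ ω)) (wedge1 ξ ω) := by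
  change inn (m + 1) (Tv v ω) (wedge1 ξ (B m ω) + B (m + 1) (wedge1 ξ ω)) = _
  rw [map_add, hinn.inner_Tv_comm v ω, hB, hB]

lemma IsDetInner.eq_zero_of_symbLap_eq_zero (hinn : IsDetInner inn) (hξ : ξ ≠ 0)
    (hB : ∀ (m : ℕ) (α : Form V m) (β : Form V (m + 1)),
      inn (m + 1) (Tv v (wedge1 ξ α)) β = inn m (Tv v α) (B m β))
    {k : ℕ} {ω : Form V k} (h : symbLap ξ B ω = 0) : ω = 0 := by
  cases k with
  | zero =>
    change B 0 (wedge1 ξ ω) = 0 at h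
    refine eq_zero_of_wedge1_eq_zero hξ ((hinn.inner_Tv_self_eq_zero v).mp ?_)
    rw [hB, h, map_zero]
  | succ m =>
    have hsum := hinn.inner_Tv_symbLap hB ω
    rw [h, map_zero, eq_comm, add_eq_zero_iff_of_nonneg (hinn.inner_Tv_self_nonneg v _)
      (hinn.inner_Tv_self_nonneg v _), hinn.inner_Tv_self_eq_zero,
      hinn.inner_Tv_self_eq_zero] at hsum
    obtain ⟨τ, rfl⟩ := exists_eq_wedge1_of_wedge1_eq_zero hξ hsum.2
    rw [← hinn.inner_Tv_self_eq_zero v, hB, hsum.1, map_zero]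

end SymbolLaplacian

/-- if `ξ ≠ 0`, `A = ξ ∧ ·` and `A^*` is its adjoint with respect to the
`v`-induced inner products `⟨ω, η⟩_v = ⟨T_v ω, η⟩`, then `A A^* + A^* A : Λ^k V^* → Λ^k V^*`
is injective, hence a linear isomorphism. -/
theorem symbol_laplacian_bijective
    {V : Type*} [NormedAddCommGroup V] [InnerProductSpace ℝ V] [FiniteDimensional ℝ V]
    (v : V) (inn : ∀ k, Form V k →ₗ[ℝ] Form V k →ₗ[ℝ] ℝ) (hinn : IsDetInner inn)
    (ξ : V →ₗ[ℝ] ℝ) (hξ : ξ ≠ 0)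
    (B : ∀ m, Form V (m + 1) →ₗ[ℝ] Form V m)
    (hB : ∀ (m : ℕ) (α : Form V m) (β : Form V (m + 1)),
      inn (m + 1) (Tv v (wedge1 ξ α)) β = inn m (Tv v α) (B m β))
    (k : ℕ) :
    Function.Injective (fun ω : Form V k => symbLap ξ B ω) ∧
      Function.Bijective (fun ω : Form V k => symbLap ξ B ω) := by
  have hinj : Function.Injective (symbLapₗ ξ B k) :=
    (injective_iff_map_eq_zero _).mpr fun ω hω =>
      hinn.eq_zero_of_symbLap_eq_zero hξ hB (by rwa [← coe_symbLapₗ])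
  rw [← coe_symbLapₗ]
  exact ⟨hinj, hinj, LinearMap.injective_iff_surjective.mp hinj⟩

end VF
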